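/- arXiv:2006.15700 — 5 statements merged into one kernel-verified Lean document; each statement's English description precedes it below -/
import Mathlib

section
/- For every real number y, (1/Re)·u1''(y) + G + B1'(y) = 0. That is, the Hartmann velocity and magnetic-field profiles satisfy the streamwise momentum balance −(1/Re)·u1''(y) + ∂p/∂x − B1'(y) = 0, where the driving pressure gradient is ∂p/∂x = −G. -/
open Real

/-! Since `tanh = sinh / cosh`, differentiating twice gives
`u1''(y) / Re = -(G·Ha / (2·sinh(Ha/2)))·cosh(y·Ha)`, which cancels the `cosh` part of `B1'(y)`;
the linear part `-G·y` of `B1` contributes `-G`, balancing the pressure gradient. -/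

lemma deriv_deriv_mul_one_sub_cosh_mul_div (A a c : ℝ) :
    deriv (deriv fun y => A * (1 - cosh (y * a) / c)) =
      fun y => -(A * a ^ 2 / c) * cosh (y * a) := by
  have first : deriv (fun y => A * (1 - cosh (y * a) / c)) =
      fun y => -(A * a / c) * sinh (y * a) := by
    ext y
    exact ((((hasDerivAt_mul_const a).cosh.div_const c).const_sub 1).const_mul A
      |>.congr_deriv (by ring)).deriv
  ext y
  rw [first]
  exact ((hasDerivAt_mul_const a).sinh.const_mul _ |>.congr_deriv (by ring)).deriv

lemma deriv_mul_sinh_mul_div_sub (D a s : ℝ) :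
    deriv (fun y => D * (sinh (y * a) / s - 2 * y)) =
      fun y => D * (a * cosh (y * a) / s - 2) := by
  ext y
  exact ((((hasDerivAt_mul_const a).sinh.div_const s).sub
    ((hasDerivAt_id' y).const_mul 2)).const_mul D |>.congr_deriv (by ring)).deriv

theorem hartmann_momentum_balance_general
    (Re : ℝ) (hRe : 0 < Re)
    (Ha : ℝ) (hHapos : 0 < Ha)
    (G : ℝ)
    (u1 B1 : ℝ → ℝ)
    (hu1 : ∀ y : ℝ, u1 y =
      (G * Re / (2 * Ha * Real.tanh (Ha / 2))) * (1 - Real.cosh (y * Ha) / Real.cosh (Ha / 2)))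
    (hB1 : ∀ y : ℝ, B1 y = (G / 2) * (Real.sinh (y * Ha) / Real.sinh (Ha / 2) - 2 * y)) :
    ∀ y : ℝ, (1 / Re) * deriv (deriv u1) y + G + deriv B1 y = 0 := by
  intro y
  rw [funext hu1, funext hB1, deriv_deriv_mul_one_sub_cosh_mul_div,
    deriv_mul_sinh_mul_div_sub, tanh_eq_sinh_div_cosh]
  have hsinh : sinh (Ha / 2) ≠ 0 := (sinh_pos_iff.2 (half_pos hHapos)).ne'
  have hcosh : cosh (Ha / 2) ≠ 0 := (cosh_pos _).ne'
  field_simp [hRe.ne', hHapos.ne']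
  ring

/-- Hartmann flow: the velocity and magnetic-field profiles satisfy the
streamwise momentum balance `(1/Re)·u1''(y) + G + B1'(y) = 0`. -/
theorem hartmann_momentum_balance
    (Re Rem : ℝ) (hRe : 0 < Re) (hRem : 0 < Rem)
    (Ha : ℝ) (hHa : Ha = Real.sqrt (Re * Rem)) (hHapos : 0 < Ha)
    (G : ℝ) (hG : G = 2 * Ha * Real.sinh (Ha / 2) / (Re * (Real.cosh (Ha / 2) - 1)))
    (u1 B1 : ℝ → ℝ)
    (hu1 : ∀ y : ℝ, u1 y =
      (G * Re / (2 * Ha * Real.tanh (Ha / 2))) * (1 - Real.cosh (y * Ha) / Real.cosh (Ha / 2)))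
    (hB1 : ∀ y : ℝ, B1 y = (G / 2) * (Real.sinh (y * Ha) / Real.sinh (Ha / 2) - 2 * y)) :
    ∀ y : ℝ, (1 / Re) * deriv (deriv u1) y + G + deriv B1 y = 0 :=
  hartmann_momentum_balance_general Re hRe Ha hHapos G u1 B1 hu1 hB1
end

section
/- The scalar curl of the island-coalescence equilibrium magnetic field has the closed form: for every (x,y) ∈ ℝ², ∂x(k·sin(2πx)/D(x,y)) − ∂y(sinh(2πy)/D(x,y)) = 2π·(k² − 1)/D(x,y)². -/
open Real

lemma Dpos (k : ℝ) (hk0 : 0 < k) (hk1 : k < 1) (x y : ℝ) :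
    0 < Real.cosh (2 * π * y) + k * Real.cos (2 * π * x) := by
  have h1 : (1:ℝ) ≤ Real.cosh (2 * π * y) := Real.one_le_cosh _
  have h2 : |k * Real.cos (2 * π * x)| ≤ k := by
    rw [abs_mul, abs_of_pos hk0]
    calc k * |Real.cos (2 * π * x)| ≤ k * 1 := by
          exact mul_le_mul_of_nonneg_left (Real.abs_cos_le_one _) hk0.le
      _ = k := mul_one k
  nlinarith [abs_le.mp h2]

/-- Island coalescence: the scalar curl of the equilibrium magnetic field
`B0(x,y) = (sinh(2πy)/D(x,y), k·sin(2πx)/D(x,y))` has the closed form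
`2π(k² − 1)/D(x,y)²`. -/
theorem island_equilibrium_curl_closed_form
    (k : ℝ) (hk0 : 0 < k) (hk1 : k < 1)
    (D : ℝ → ℝ → ℝ)
    (hD : ∀ x y : ℝ, D x y = Real.cosh (2 * π * y) + k * Real.cos (2 * π * x)) :
    ∀ x y : ℝ,
      deriv (fun x' : ℝ => k * Real.sin (2 * π * x') / D x' y) x
        - deriv (fun y' : ℝ => Real.sinh (2 * π * y') / D x y') y
        = 2 * π * (k ^ 2 - 1) / (D x y) ^ 2 := by
  intro x y
  have hpos := Dpos k hk0 hk1 x y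
  have hne : Real.cosh (2 * π * y) + k * Real.cos (2 * π * x) ≠ 0 := ne_of_gt hpos
  -- x-derivative
  have hlin : ∀ t : ℝ, HasDerivAt (fun s : ℝ => 2 * π * s) (2 * π) t := by
    intro t
    simpa using (hasDerivAt_id t).const_mul (2 * π)
  have hf1 : HasDerivAt (fun x' : ℝ => k * Real.sin (2 * π * x'))
      (k * (Real.cos (2 * π * x) * (2 * π))) x :=
    ((Real.hasDerivAt_sin _).comp x (hlin x)).const_mul k
  have hg1 : HasDerivAt (fun x' : ℝ => Real.cosh (2 * π * y) + k * Real.cos (2 * π * x'))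
      (0 + k * (-Real.sin (2 * π * x) * (2 * π))) x :=
    (hasDerivAt_const x _).add (((Real.hasDerivAt_cos _).comp x (hlin x)).const_mul k)
  have hx : HasDerivAt (fun x' : ℝ => k * Real.sin (2 * π * x') / D x' y)
      ((k * (Real.cos (2 * π * x) * (2 * π)) *
          (Real.cosh (2 * π * y) + k * Real.cos (2 * π * x)) -
        k * Real.sin (2 * π * x) * (0 + k * (-Real.sin (2 * π * x) * (2 * π)))) /
        (Real.cosh (2 * π * y) + k * Real.cos (2 * π * x)) ^ 2) x := by
    have hfun : (fun x' : ℝ => k * Real.sin (2 * π * x') / D x' y)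
        = fun x' : ℝ => k * Real.sin (2 * π * x') /
            (Real.cosh (2 * π * y) + k * Real.cos (2 * π * x')) :=
      funext fun x' => by rw [hD]
    rw [hfun]
    exact hf1.div hg1 hne
  -- y-derivative
  have hf2 : HasDerivAt (fun y' : ℝ => Real.sinh (2 * π * y'))
      (Real.cosh (2 * π * y) * (2 * π)) y :=
    (Real.hasDerivAt_sinh _).comp y (hlin y)
  have hg2 : HasDerivAt (fun y' : ℝ => Real.cosh (2 * π * y') + k * Real.cos (2 * π * x))
      (Real.sinh (2 * π * y) * (2 * π) + 0) y :=
    ((Real.hasDerivAt_cosh _).comp y (hlin y)).add (hasDerivAt_const y _)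
  have hy : HasDerivAt (fun y' : ℝ => Real.sinh (2 * π * y') / D x y')
      ((Real.cosh (2 * π * y) * (2 * π) *
          (Real.cosh (2 * π * y) + k * Real.cos (2 * π * x)) -
        Real.sinh (2 * π * y) * (Real.sinh (2 * π * y) * (2 * π) + 0)) /
        (Real.cosh (2 * π * y) + k * Real.cos (2 * π * x)) ^ 2) y := by
    have hfun : (fun y' : ℝ => Real.sinh (2 * π * y') / D x y')
        = fun y' : ℝ => Real.sinh (2 * π * y') /
            (Real.cosh (2 * π * y') + k * Real.cos (2 * π * x)) :=
      funext fun y' => by rw [hD]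
    rw [hfun]
    exact hf2.div hg2 hne
  rw [hx.deriv, hy.deriv, hD x y]
  have hpy : Real.sin (2 * π * x) ^ 2 + Real.cos (2 * π * x) ^ 2 = 1 :=
    Real.sin_sq_add_cos_sq _
  have hhy : Real.cosh (2 * π * y) ^ 2 - Real.sinh (2 * π * y) ^ 2 = 1 :=
    Real.cosh_sq_sub_sinh_sq _
  rw [div_sub_div_same]
  have hnum : k * (Real.cos (2 * π * x) * (2 * π)) *
        (Real.cosh (2 * π * y) + k * Real.cos (2 * π * x)) -
      k * Real.sin (2 * π * x) * (0 + k * (-Real.sin (2 * π * x) * (2 * π))) -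
      (Real.cosh (2 * π * y) * (2 * π) *
          (Real.cosh (2 * π * y) + k * Real.cos (2 * π * x)) -
        Real.sinh (2 * π * y) * (Real.sinh (2 * π * y) * (2 * π) + 0))
      = 2 * π * (k ^ 2 - 1) := by
    linear_combination (2 * π * k ^ 2) * hpy - (2 * π) * hhy
  rw [hnum]
end

section
/- The island-coalescence equilibrium pressure balances the Lorentz force: for every (x,y) ∈ ℝ², ∂x p(x,y) = −j(x,y)·(k·sin(2πx)/D(x,y)) and ∂y p(x,y) = j(x,y)·(sinh(2πy)/D(x,y)), where j(x,y) = 2π·(k² − 1)/D(x,y)² is the scalar curl of B0. Equivalently, ∂x p(x,y) = 2πk·(1 − k²)·sin(2πx)/D(x,y)³ and ∂y p(x,y) = 2π·(k² − 1)·sinh(2πy)/D(x,y)³, so ∇p = (curl B0) × B0 and the stationary momentum equation holds with zero velocity and zero body force. -/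
/-!
The pressure is a function of `D` alone, `p = c (1 + D⁻²)` with `c = (1 - k²)/2`, so by the
chain rule `∇p = -2c ∇D / D³ = (k² - 1) ∇D / D³`, and `∇D = (-2πk sin 2πx, 2π sinh 2πy)`.
Since `cosh ≥ 1 > |k|`, `D` never vanishes, so all these derivatives exist.
-/

open Real

theorem cosh_add_mul_cos_pos {k : ℝ} (hk : |k| < 1) (a b : ℝ) : 0 < cosh a + k * cos b := by
  have hcos : |k * cos b| ≤ |k| := by
    rw [abs_mul]
    exact mul_le_of_le_one_right (abs_nonneg k) (abs_cos_le_one b)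
  linarith [one_le_cosh a, neg_abs_le (k * cos b)]

theorem hasDerivAt_add_mul_cos_mul (a k c x : ℝ) :
    HasDerivAt (fun t => a + k * cos (c * t)) (-(c * k * sin (c * x))) x :=
  ((((hasDerivAt_id' x).const_mul c).cos.const_mul k).const_add a).congr_deriv (by ring)

theorem hasDerivAt_cosh_mul_add (c b y : ℝ) :
    HasDerivAt (fun t => cosh (c * t) + b) (c * sinh (c * y)) y :=
  (((hasDerivAt_id' y).const_mul c).cosh.add_const b).congr_deriv (by ring)

theorem HasDerivAt.const_mul_one_add_one_div_sq {𝕜 : Type*} [NontriviallyNormedField 𝕜]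
    {f : 𝕜 → 𝕜} {f' x : 𝕜} (c : 𝕜) (hf : HasDerivAt f f' x) (hx : f x ≠ 0) :
    HasDerivAt (fun t => c * (1 + 1 / f t ^ 2)) (-2 * c * f' / f x ^ 3) x := by
  have h := (((hf.fun_pow 2).fun_inv (pow_ne_zero 2 hx)).const_add 1).const_mul c
  simp only [one_div]
  refine h.congr_deriv ?_
  field_simp
  ring

/-- Island coalescence: the equilibrium pressure `p = ((1−k²)/2)(1 + 1/D²)` balances
the Lorentz force: `∇p = (curl B0) × B0 = (−j·B0₂, j·B0₁)` with
`j(x,y) = 2π(k² − 1)/D(x,y)²`; equivalently,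
`∂x p = 2πk(1−k²)·sin(2πx)/D³` and `∂y p = 2π(k²−1)·sinh(2πy)/D³`. -/
theorem island_pressure_balances_lorentz
    (k : ℝ) (hk0 : 0 < k) (hk1 : k < 1)
    (D : ℝ → ℝ → ℝ) (p j : ℝ → ℝ → ℝ)
    (hD : ∀ x y : ℝ, D x y = Real.cosh (2 * π * y) + k * Real.cos (2 * π * x))
    (hp : ∀ x y : ℝ, p x y = ((1 - k ^ 2) / 2) * (1 + 1 / (D x y) ^ 2))
    (hj : ∀ x y : ℝ, j x y = 2 * π * (k ^ 2 - 1) / (D x y) ^ 2) :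
    ∀ x y : ℝ,
      (deriv (fun x' : ℝ => p x' y) x = -(j x y) * (k * Real.sin (2 * π * x) / D x y)) ∧
      (deriv (fun y' : ℝ => p x y') y = j x y * (Real.sinh (2 * π * y) / D x y)) ∧
      (deriv (fun x' : ℝ => p x' y) x
        = 2 * π * k * (1 - k ^ 2) * Real.sin (2 * π * x) / (D x y) ^ 3) ∧
      (deriv (fun y' : ℝ => p x y') y
        = 2 * π * (k ^ 2 - 1) * Real.sinh (2 * π * y) / (D x y) ^ 3) := by
  obtain rfl : D = fun x y => cosh (2 * π * y) + k * cos (2 * π * x) := funext₂ hD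
  obtain rfl : p = fun x y => ((1 - k ^ 2) / 2) *
      (1 + 1 / (cosh (2 * π * y) + k * cos (2 * π * x)) ^ 2) := funext₂ hp
  obtain rfl : j = fun x y =>
      2 * π * (k ^ 2 - 1) / (cosh (2 * π * y) + k * cos (2 * π * x)) ^ 2 := funext₂ hj
  intro x y
  have hDne : cosh (2 * π * y) + k * cos (2 * π * x) ≠ 0 :=
    (cosh_add_mul_cos_pos (abs_lt.2 ⟨by linarith, hk1⟩) _ _).ne'
  have hpx := (hasDerivAt_add_mul_cos_mul (cosh (2 * π * y)) k (2 * π) x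
    ).const_mul_one_add_one_div_sq ((1 - k ^ 2) / 2) hDne
  have hpy := (hasDerivAt_cosh_mul_add (2 * π) (k * cos (2 * π * x)) y
    ).const_mul_one_add_one_div_sq ((1 - k ^ 2) / 2) hDne
  simp only [hpx.deriv, hpy.deriv]
  refine ⟨?_, ?_, ?_, ?_⟩ <;> field_simp <;> ring
end

section
/- The island-coalescence equilibrium satisfies the stationary induction equation with the stated forcing: for every (x,y) ∈ ℝ², (1/Re_m)·(∂y j(x,y), −∂x j(x,y)) = (−8π²·(k² − 1)/(Re_m·D(x,y)³))·(sinh(2πy), k·sin(2πx)), where j(x,y) = 2π·(k² − 1)/D(x,y)² is the scalar curl of B0; that is, (1/Re_m)·curl(curl B0) = g with g the forcing prescribed for the island coalescence problem. -/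
open Real

/-! The current `j = 2π(k² − 1)/D²` is a constant over `D²`, so its partial derivatives are
`−2·2π(k² − 1)·∂D/D³`, with `∂y D = 2π sinh(2πy)` and `∂x D = −2πk sin(2πx)`. This is legitimate
because `D ≥ 1 − k > 0`. -/

theorem HasDerivAt.const_div_sq {𝕜 : Type*} [NontriviallyNormedField 𝕜] {f : 𝕜 → 𝕜} {f' x : 𝕜}
    (c : 𝕜) (hf : HasDerivAt f f' x) (hx : f x ≠ 0) :
    HasDerivAt (fun t => c / f t ^ 2) (-2 * c * f' / f x ^ 3) x := by
  refine ((hasDerivAt_const x c).fun_div (hf.fun_pow 2) (pow_ne_zero 2 hx)).congr_deriv ?_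
  field_simp
  ring

theorem hasDerivAt_cosh_add_mul_cos_left (k x y : ℝ) :
    HasDerivAt (fun y' => cosh (2 * π * y') + k * cos (2 * π * x)) (2 * π * sinh (2 * π * y)) y :=
  (((hasDerivAt_id' y).const_mul (2 * π)).cosh.add_const _).congr_deriv (by ring)

theorem hasDerivAt_cosh_add_mul_cos_right (k x y : ℝ) :
    HasDerivAt (fun x' => cosh (2 * π * y) + k * cos (2 * π * x'))
      (-(2 * π * (k * sin (2 * π * x)))) x :=
  ((((hasDerivAt_id' x).const_mul (2 * π)).cos.const_mul k).const_add _).congr_deriv (by ring)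

theorem island_induction_with_forcing_general
    (k : ℝ) (hk0 : 0 < k) (hk1 : k < 1)
    (Rem : ℝ)
    (D : ℝ → ℝ → ℝ) (j : ℝ → ℝ → ℝ)
    (hD : ∀ x y : ℝ, D x y = Real.cosh (2 * π * y) + k * Real.cos (2 * π * x))
    (hj : ∀ x y : ℝ, j x y = 2 * π * (k ^ 2 - 1) / (D x y) ^ 2) :
    ∀ x y : ℝ,
      ((1 / Rem) * deriv (fun y' : ℝ => j x y') y
        = (-8 * π ^ 2 * (k ^ 2 - 1) / (Rem * (D x y) ^ 3)) * Real.sinh (2 * π * y)) ∧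
      ((1 / Rem) * (-(deriv (fun x' : ℝ => j x' y) x))
        = (-8 * π ^ 2 * (k ^ 2 - 1) / (Rem * (D x y) ^ 3)) * (k * Real.sin (2 * π * x))) := by
  intro x y
  have hD_ne : D x y ≠ 0 := hD x y ▸ (cosh_add_mul_cos_pos (abs_lt.mpr ⟨by linarith, hk1⟩) _ _).ne'
  have hDy : HasDerivAt (fun y' => D x y') (2 * π * sinh (2 * π * y)) y := by
    simpa only [hD] using hasDerivAt_cosh_add_mul_cos_left k x y
  have hDx : HasDerivAt (fun x' => D x' y) (-(2 * π * (k * sin (2 * π * x)))) x := by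
    simpa only [hD] using hasDerivAt_cosh_add_mul_cos_right k x y
  simp only [hj]
  constructor
  · rw [(hDy.const_div_sq _ hD_ne).deriv]
    ring
  · rw [(hDx.const_div_sq _ hD_ne).deriv]
    ring

/-- Island coalescence: the equilibrium satisfies the stationary induction equation
`(1/Re_m)·curl(curl B0) = g`, i.e. with `j(x,y) = 2π(k² − 1)/D(x,y)²` the scalar curl
of `B0` and `curl j = (∂y j, −∂x j)`,
`(1/Re_m)·(∂y j, −∂x j) = (−8π²(k²−1)/(Re_m·D³))·(sinh(2πy), k·sin(2πx))`. -/
theorem island_induction_with_forcing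
    (k : ℝ) (hk0 : 0 < k) (hk1 : k < 1)
    (Rem : ℝ) (hRem : 0 < Rem)
    (D : ℝ → ℝ → ℝ) (j : ℝ → ℝ → ℝ)
    (hD : ∀ x y : ℝ, D x y = Real.cosh (2 * π * y) + k * Real.cos (2 * π * x))
    (hj : ∀ x y : ℝ, j x y = 2 * π * (k ^ 2 - 1) / (D x y) ^ 2) :
    ∀ x y : ℝ,
      ((1 / Rem) * deriv (fun y' : ℝ => j x y') y
        = (-8 * π ^ 2 * (k ^ 2 - 1) / (Rem * (D x y) ^ 3)) * Real.sinh (2 * π * y)) ∧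
      ((1 / Rem) * (-(deriv (fun x' : ℝ => j x' y) x))
        = (-8 * π ^ 2 * (k ^ 2 - 1) / (Rem * (D x y) ^ 3)) * (k * Real.sin (2 * π * x))) :=
  island_induction_with_forcing_general k hk0 hk1 Rem D j hD hj
end

section
/- The quadruple (u, B, p, r) = (0, B0, p, 0) is an exact stationary solution of the two-dimensional incompressible viscoresistive MHD system with fluid forcing f = 0 and magnetic forcing g(x,y) = (−8π²·(k² − 1)/(Re_m·D(x,y)³))·(sinh(2πy), k·sin(2πx)); explicitly, for every (x,y) ∈ ℝ²: (i) ∇p(x,y) − (curl B0)(x,y) × B0(x,y) = (0,0); (ii) (1/Re_m)·curl((curl B0))(x,y) = g(x,y); (iii) div u = 0 trivially; and (iv) div B0(x,y) = 0. -/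
open Real

namespace IslandCoalescence

noncomputable section

def den (k x y : ℝ) : ℝ := cosh (2 * π * y) + k * cos (2 * π * x)

def fieldX (k x y : ℝ) : ℝ := sinh (2 * π * y) / den k x y

def fieldY (k x y : ℝ) : ℝ := k * sin (2 * π * x) / den k x y

def current (k x y : ℝ) : ℝ := 2 * π * (k ^ 2 - 1) / den k x y ^ 2

def pressure (k x y : ℝ) : ℝ := ((1 - k ^ 2) / 2) * (1 + 1 / den k x y ^ 2)

variable {k : ℝ}

theorem den_pos (hk : |k| < 1) (x y : ℝ) : 0 < den k x y := by
  have hcos : |k * cos (2 * π * x)| ≤ |k| := by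
    rw [abs_mul]
    exact mul_le_of_le_one_right (abs_nonneg k) (abs_cos_le_one _)
  have := neg_abs_le (k * cos (2 * π * x))
  have := one_le_cosh (2 * π * y)
  unfold den
  linarith

theorem hasDerivAt_den_x (x y : ℝ) :
    HasDerivAt (fun x' => den k x' y) (-(2 * π * k * sin (2 * π * x))) x := by
  have h := (((hasDerivAt_id' x).const_mul (2 * π)).cos.const_mul k).const_add (cosh (2 * π * y))
  exact h.congr_deriv (by ring)

theorem hasDerivAt_den_y (x y : ℝ) :
    HasDerivAt (fun y' => den k x y') (2 * π * sinh (2 * π * y)) y := by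
  have h := ((hasDerivAt_id' y).const_mul (2 * π)).cosh.add_const (k * cos (2 * π * x))
  exact h.congr_deriv (by ring)

theorem hasDerivAt_fieldY_x (hk : |k| < 1) (x y : ℝ) :
    HasDerivAt (fun x' => fieldY k x' y)
      (2 * π * k * (k + cosh (2 * π * y) * cos (2 * π * x)) / den k x y ^ 2) x := by
  have hnum := ((hasDerivAt_id' x).const_mul (2 * π)).sin.const_mul k
  refine (hnum.fun_div (hasDerivAt_den_x x y) (den_pos hk x y).ne').congr_deriv ?_
  have hpyth := sin_sq_add_cos_sq (2 * π * x)
  field_simp [(den_pos hk x y).ne']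
  unfold den
  linear_combination k ^ 2 * hpyth

theorem hasDerivAt_fieldX_y (hk : |k| < 1) (x y : ℝ) :
    HasDerivAt (fun y' => fieldX k x y')
      (2 * π * (1 + k * cos (2 * π * x) * cosh (2 * π * y)) / den k x y ^ 2) y := by
  have hnum := ((hasDerivAt_id' y).const_mul (2 * π)).sinh
  refine (hnum.fun_div (hasDerivAt_den_y x y) (den_pos hk x y).ne').congr_deriv ?_
  have hpyth := cosh_sq_sub_sinh_sq (2 * π * y)
  field_simp [(den_pos hk x y).ne']
  unfold den
  linear_combination hpyth

theorem curl_field_eq_current (hk : |k| < 1) (x y : ℝ) :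
    deriv (fun x' => fieldY k x' y) x - deriv (fun y' => fieldX k x y') y = current k x y := by
  rw [(hasDerivAt_fieldY_x hk x y).deriv, (hasDerivAt_fieldX_y hk x y).deriv, current]
  ring

theorem hasDerivAt_pressure_x (hk : |k| < 1) (x y : ℝ) :
    HasDerivAt (fun x' => pressure k x' y)
      (-current k x y * fieldY k x y) x := by
  have h := (((hasDerivAt_den_x x y).const_div_sq 1 (den_pos hk x y).ne').const_add 1).const_mul
    ((1 - k ^ 2) / 2)
  refine h.congr_deriv ?_
  unfold current fieldY
  field_simp [(den_pos hk x y).ne']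
  ring

theorem hasDerivAt_pressure_y (hk : |k| < 1) (x y : ℝ) :
    HasDerivAt (fun y' => pressure k x y')
      (current k x y * fieldX k x y) y := by
  have h := (((hasDerivAt_den_y x y).const_div_sq 1 (den_pos hk x y).ne').const_add 1).const_mul
    ((1 - k ^ 2) / 2)
  refine h.congr_deriv ?_
  unfold current fieldX
  field_simp [(den_pos hk x y).ne']
  ring

theorem hasDerivAt_current_x (hk : |k| < 1) (x y : ℝ) :
    HasDerivAt (fun x' => current k x' y)
      (8 * π ^ 2 * (k ^ 2 - 1) / den k x y ^ 3 * (k * sin (2 * π * x))) x :=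
  ((hasDerivAt_den_x x y).const_div_sq _ (den_pos hk x y).ne').congr_deriv (by ring)

theorem hasDerivAt_current_y (hk : |k| < 1) (x y : ℝ) :
    HasDerivAt (fun y' => current k x y')
      (-8 * π ^ 2 * (k ^ 2 - 1) / den k x y ^ 3 * sinh (2 * π * y)) y :=
  ((hasDerivAt_den_y x y).const_div_sq _ (den_pos hk x y).ne').congr_deriv (by ring)

theorem div_field_eq_zero (hk : |k| < 1) (x y : ℝ) :
    deriv (fun x' => fieldX k x' y) x + deriv (fun y' => fieldY k x y') y = 0 := by
  have hD := (den_pos hk x y).ne'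
  unfold fieldX fieldY
  rw [((hasDerivAt_const x _).fun_div (hasDerivAt_den_x x y) hD).deriv,
    ((hasDerivAt_const y _).fun_div (hasDerivAt_den_y x y) hD).deriv]
  ring

end

end IslandCoalescence

open IslandCoalescence

theorem island_exact_stationary_solution_general
    (k : ℝ) (hk0 : 0 < k) (hk1 : k < 1)
    (Rem : ℝ)
    (D : ℝ → ℝ → ℝ) (p j : ℝ → ℝ → ℝ)
    (hD : ∀ x y : ℝ, D x y = Real.cosh (2 * π * y) + k * Real.cos (2 * π * x))
    (hp : ∀ x y : ℝ, p x y = ((1 - k ^ 2) / 2) * (1 + 1 / (D x y) ^ 2))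
    (hj : ∀ x y : ℝ, j x y =
      deriv (fun x' : ℝ => k * Real.sin (2 * π * x') / D x' y) x
        - deriv (fun y' : ℝ => Real.sinh (2 * π * y') / D x y') y) :
    ∀ x y : ℝ,
      -- (i) momentum: ∇p − (curl B0) × B0 = 0, componentwise:
      (deriv (fun x' : ℝ => p x' y) x - (-(j x y) * (k * Real.sin (2 * π * x) / D x y)) = 0) ∧
      (deriv (fun y' : ℝ => p x y') y - j x y * (Real.sinh (2 * π * y) / D x y) = 0) ∧
      -- (ii) induction: (1/Re_m)·curl(curl B0) = g, componentwise:
      ((1 / Rem) * deriv (fun y' : ℝ => j x y') y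
        = (-8 * π ^ 2 * (k ^ 2 - 1) / (Rem * (D x y) ^ 3)) * Real.sinh (2 * π * y)) ∧
      ((1 / Rem) * (-(deriv (fun x' : ℝ => j x' y) x))
        = (-8 * π ^ 2 * (k ^ 2 - 1) / (Rem * (D x y) ^ 3)) * (k * Real.sin (2 * π * x))) ∧
      -- (iii) divergence-free (zero) velocity:
      (deriv (fun _x' : ℝ => (0 : ℝ)) x + deriv (fun _y' : ℝ => (0 : ℝ)) y = 0) ∧
      -- (iv) divergence-free magnetic field:
      (deriv (fun x' : ℝ => Real.sinh (2 * π * y) / D x' y) x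
        + deriv (fun y' : ℝ => k * Real.sin (2 * π * x) / D x y') y = 0) := by
  have hk : |k| < 1 := abs_lt.mpr ⟨by linarith, hk1⟩
  obtain rfl : D = den k := funext₂ hD
  obtain rfl : p = pressure k := funext₂ hp
  obtain rfl : j = current k := funext₂ fun x y => (hj x y).trans (curl_field_eq_current hk x y)
  intro x y
  refine ⟨sub_eq_zero_of_eq (hasDerivAt_pressure_x hk x y).deriv,
    sub_eq_zero_of_eq (hasDerivAt_pressure_y hk x y).deriv, ?_, ?_, by simp,
    div_field_eq_zero hk x y⟩
  · rw [(hasDerivAt_current_y hk x y).deriv]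
    ring
  · rw [(hasDerivAt_current_x hk x y).deriv]
    ring

/-- Island coalescence: `(u, B, p, r) = (0, B0, p, 0)` is an exact stationary solution
of the 2D incompressible viscoresistive MHD system with forcing `f = 0` and
`g(x,y) = (−8π²(k²−1)/(Re_m·D³))·(sinh(2πy), k·sin(2πx))`.  With
`j = curl B0 = ∂x B0₂ − ∂y B0₁` the scalar curl and `j × B0 = (−j·B0₂, j·B0₁)`:
(i) `∇p − j × B0 = (0,0)`;
(ii) `(1/Re_m)·(∂y j, −∂x j) = g`;
(iii) `div u = 0` trivially; (iv) `div B0 = 0`. -/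
theorem island_exact_stationary_solution
    (k : ℝ) (hk0 : 0 < k) (hk1 : k < 1)
    (Rem : ℝ) (hRem : 0 < Rem)
    (D : ℝ → ℝ → ℝ) (p j : ℝ → ℝ → ℝ)
    (hD : ∀ x y : ℝ, D x y = Real.cosh (2 * π * y) + k * Real.cos (2 * π * x))
    (hp : ∀ x y : ℝ, p x y = ((1 - k ^ 2) / 2) * (1 + 1 / (D x y) ^ 2))
    (hj : ∀ x y : ℝ, j x y =
      deriv (fun x' : ℝ => k * Real.sin (2 * π * x') / D x' y) x
        - deriv (fun y' : ℝ => Real.sinh (2 * π * y') / D x y') y) :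
    ∀ x y : ℝ,
      -- (i) momentum: ∇p − (curl B0) × B0 = 0, componentwise:
      (deriv (fun x' : ℝ => p x' y) x - (-(j x y) * (k * Real.sin (2 * π * x) / D x y)) = 0) ∧
      (deriv (fun y' : ℝ => p x y') y - j x y * (Real.sinh (2 * π * y) / D x y) = 0) ∧
      -- (ii) induction: (1/Re_m)·curl(curl B0) = g, componentwise:
      ((1 / Rem) * deriv (fun y' : ℝ => j x y') y
        = (-8 * π ^ 2 * (k ^ 2 - 1) / (Rem * (D x y) ^ 3)) * Real.sinh (2 * π * y)) ∧
      ((1 / Rem) * (-(deriv (fun x' : ℝ => j x' y) x))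
        = (-8 * π ^ 2 * (k ^ 2 - 1) / (Rem * (D x y) ^ 3)) * (k * Real.sin (2 * π * x))) ∧
      -- (iii) divergence-free (zero) velocity:
      (deriv (fun _x' : ℝ => (0 : ℝ)) x + deriv (fun _y' : ℝ => (0 : ℝ)) y = 0) ∧
      -- (iv) divergence-free magnetic field:
      (deriv (fun x' : ℝ => Real.sinh (2 * π * y) / D x' y) x
        + deriv (fun y' : ℝ => k * Real.sin (2 * π * x) / D x y') y = 0) :=
  island_exact_stationary_solution_general k hk0 hk1 Rem D p j hD hp hj
end
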